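/- arXiv:math/0604481 — 4 statements merged into one kernel-verified Lean document; each statement's English description precedes it below -/
import Mathlib

section
/- Let G be a finite connected graph and suppose there is exactly one vertex x₀ of G whose eccentricity equals some value r. Then r is the minimum eccentricity (the radius) of G, i.e., every other vertex has eccentricity strictly greater than r. -/
/-- The eccentricity of a vertex in a finite graph: the maximum distance
from `u` to any vertex. -/
noncomputable def SimpleGraph.ecc {V : Type*} [Fintype V] (G : SimpleGraph V) (u : V) : ℕ :=
  Finset.univ.sup (G.dist u)

lemma ecc_dist_le {V : Type*} [Fintype V] (G : SimpleGraph V) (u v : V) :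
    G.dist u v ≤ G.ecc u :=
  Finset.le_sup (Finset.mem_univ v)

lemma exists_ecc {V : Type*} [Fintype V] [Nonempty V] (G : SimpleGraph V) (u : V) :
    ∃ v, G.dist u v = G.ecc u := by
  obtain ⟨v, -, hv⟩ := Finset.exists_mem_eq_sup Finset.univ Finset.univ_nonempty (G.dist u)
  exact ⟨v, hv.symm⟩

lemma ecc_lipschitz {V : Type*} [Fintype V] [Nonempty V] (G : SimpleGraph V)
    (hG : G.Connected) (a b : V) (hab : G.Adj a b) :
    G.ecc b ≤ G.ecc a + 1 := by
  apply Finset.sup_le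
  intro v _
  calc G.dist b v ≤ G.dist b a + G.dist a v := hG.dist_triangle
    _ ≤ 1 + G.ecc a := by
        gcongr
        · exact le_of_eq ((SimpleGraph.dist_eq_one_iff_adj).mpr hab.symm)
        · exact ecc_dist_le G a v
    _ = G.ecc a + 1 := by omega

/-- Discrete intermediate value along a walk. -/
lemma ivt_walk {V : Type*} [Fintype V] [Nonempty V] (G : SimpleGraph V)
    (hG : G.Connected) (r : ℕ) :
    ∀ {a b : V} (p : G.Walk a b), G.ecc a ≤ r → r ≤ G.ecc b →
      ∃ z ∈ p.support, G.ecc z = r := by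
  intro a b p
  induction p with
  | nil => intro h1 h2; exact ⟨_, by simp, le_antisymm h1 h2⟩
  | @cons a c b hac p ih =>
    intro h1 h2
    by_cases hr : G.ecc a = r
    · exact ⟨a, by simp, hr⟩
    · have hc : G.ecc c ≤ r := by
        have := ecc_lipschitz G hG a c hac
        omega
      obtain ⟨z, hz, hz'⟩ := ih hc h2
      exact ⟨z, by simp [hz], hz'⟩

/-- If a finite connected graph has exactly one vertex `x₀` of eccentricity
`r`, then every other vertex has eccentricity strictly greater than `r`;
in particular `r` is the radius of the graph. -/
theorem unique_eccentricity_vertex_is_center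
    {V : Type*} [Fintype V] [Nonempty V]
    (G : SimpleGraph V) (hG : G.Connected) (x₀ : V) (r : ℕ)
    (huniq : {x : V | G.ecc x = r} = {x₀}) :
    ∀ x : V, x ≠ x₀ → r < G.ecc x := by
  classical
  have hx₀ : G.ecc x₀ = r := by
    have : x₀ ∈ ({x : V | G.ecc x = r} : Set V) := huniq ▸ rfl
    exact this
  have heq : ∀ x : V, G.ecc x = r → x = x₀ := by
    intro x hx
    have : x ∈ ({x₀} : Set V) := huniq ▸ hx
    exact this
  -- first show no vertex has eccentricity < r
  have hmin : ∀ y : V, r ≤ G.ecc y := by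
    by_contra h
    push_neg at h
    obtain ⟨y, hy⟩ := h
    -- u is an eccentric vertex of x₀
    obtain ⟨u, hu⟩ := exists_ecc G x₀
    have hru : r ≤ G.ecc u := by
      rw [← hx₀, ← hu, G.dist_comm]; exact ecc_dist_le G u x₀
    have hr1 : 1 ≤ r := by omega
    have hux : u ≠ x₀ := by
      intro h; rw [h] at hu; simp [SimpleGraph.dist_self] at hu; omega
    have hgt : r < G.ecc u := lt_of_le_of_ne hru fun h => hux (heq u h.symm)
    -- shortest walk from y to u
    obtain ⟨p, hp⟩ := hG.exists_walk_length_eq_dist y u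
    obtain ⟨z, hz, hzr⟩ := ivt_walk G hG r p (le_of_lt hy) (le_of_lt hgt)
    have hzx : z = x₀ := heq z hzr
    have hz' : x₀ ∈ p.support := hzx ▸ hz
    -- x₀ on a shortest path from y to u, so dist x₀ u ≤ dist y u ≤ ecc y < r
    have h1 : G.dist x₀ u ≤ (p.dropUntil x₀ hz').length := SimpleGraph.dist_le _
    have h2 : (p.dropUntil x₀ hz').length ≤ p.length := SimpleGraph.Walk.length_dropUntil_le p hz'
    have h3 : G.dist y u ≤ G.ecc y := ecc_dist_le G y u
    rw [hp] at h2
    have : G.dist x₀ u < r := by omega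
    rw [hu, hx₀] at this
    omega
  intro x hx
  exact lt_of_le_of_ne (hmin x) fun h => hx (heq x h.symm)
end

section
/- A cycle C in a graph G without isolated vertices is a Hamiltonian cycle if and only if for every edge cut 𝒞 of G, the number of edges of C lying in 𝒞 is even and at least 2. -/
/-!
Along any walk, the number of edges crossing a cut `(s, sᶜ)` has the parity of the number of
times the walk changes side, so it is even on closed walks, and it is positive as soon as the
walk visits both sides. A Hamiltonian cycle visits both sides of every cut. Conversely, if a
cycle misses a vertex, then the cut separating its support from the rest of the vertices is
crossed by no edge of the cycle.
-/

namespace Sym2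

variable {V : Type*}

def Crosses (s : Set V) (e : Sym2 V) : Prop := ∃ a ∈ s, ∃ b ∈ sᶜ, e = s(a, b)

theorem crosses_mk_iff {s : Set V} {u w : V} : s(u, w).Crosses s ↔ ¬(u ∈ s ↔ w ∈ s) := by
  constructor
  · rintro ⟨a, ha, b, hb, hab⟩
    rcases Sym2.eq_iff.mp hab with ⟨rfl, rfl⟩ | ⟨rfl, rfl⟩ <;> simp_all
  · intro h
    by_cases hu : u ∈ s
    · exact ⟨u, hu, w, by tauto, rfl⟩
    · exact ⟨w, by tauto, u, hu, Sym2.eq_swap⟩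

end Sym2

theorem List.Nodup.ncard_setOf_mem_and {α : Type*} {l : List α} (hl : l.Nodup)
    (P : α → Prop) [DecidablePred P] : {a | a ∈ l ∧ P a}.ncard = l.countP (P ·) := by
  classical
  have : {a | a ∈ l ∧ P a} = ↑(l.filter (P ·)).toFinset := by
    ext; simp
  rw [this, Set.ncard_coe_finset, List.toFinset_card_of_nodup (hl.filter _),
    List.countP_eq_length_filter]

namespace SimpleGraph.Walk

open Sym2

variable {V : Type*} {G : SimpleGraph V}

section Cut

variable (s : Set V) [DecidablePred (Crosses s)]

theorem even_countP_crosses_iff {u w : V} (p : G.Walk u w) :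
    Even (p.edges.countP (Crosses s ·)) ↔ (u ∈ s ↔ w ∈ s) := by
  induction p with
  | nil => simp
  | @cons u x w _ p ih =>
    rw [edges_cons, List.countP_cons]
    by_cases hux : u ∈ s ↔ x ∈ s
    · simp only [crosses_mk_iff.not_left.mpr hux, decide_false, Bool.false_eq_true, if_false,
        add_zero, ih]
      tauto
    · simp only [crosses_mk_iff.mpr hux, decide_true, if_true, Nat.even_add_one, ih]
      tauto

theorem even_countP_crosses {u : V} (p : G.Walk u u) : Even (p.edges.countP (Crosses s ·)) :=
  (even_countP_crosses_iff s p).mpr Iff.rfl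

theorem countP_crosses_pos {u w a b : V} (p : G.Walk u w) (ha : a ∈ p.support)
    (hb : b ∈ p.support) (has : a ∈ s) (hbs : b ∉ s) : 0 < p.edges.countP (Crosses s ·) := by
  classical
  have pos_of_opposite {x : V} (hx : x ∈ p.support) (hux : ¬(u ∈ s ↔ x ∈ s)) :
      0 < p.edges.countP (Crosses s ·) := by
    have hodd := mt (even_countP_crosses_iff s (p.takeUntil x hx)).mp hux
    have hpos : 0 < (p.takeUntil x hx).edges.countP (Crosses s ·) :=
      Nat.pos_of_ne_zero fun h => hodd (h ▸ ⟨0, rfl⟩)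
    obtain ⟨e, he, hcross⟩ := List.countP_pos_iff.mp hpos
    exact List.countP_pos_iff.mpr ⟨e, p.edges_takeUntil_subset_edges hx he, hcross⟩
  by_cases hu : u ∈ s
  · exact pos_of_opposite hb (by tauto)
  · exact pos_of_opposite ha (by tauto)

end Cut

theorem not_crosses_support_of_mem_edges {u w : V} {p : G.Walk u w} {e : Sym2 V}
    (he : e ∈ p.edges) : ¬e.Crosses {x | x ∈ p.support} := by
  rintro ⟨a, -, b, hb, rfl⟩
  exact hb (p.snd_mem_support_of_mem_edges he)

theorem IsCycle.isHamiltonianCycle_of_forall_mem_support [DecidableEq V] {u : V} {p : G.Walk u u}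
    (hp : p.IsCycle) (h : ∀ x, x ∈ p.support) : p.IsHamiltonianCycle := by
  refine ⟨hp, hp.isPath_tail.isHamiltonian_of_mem fun x => ?_⟩
  rcases List.mem_cons.mp (cons_support_tail hp.not_nil ▸ h x) with rfl | hx
  · exact p.tail.end_mem_support
  · exact hx

end SimpleGraph.Walk

open SimpleGraph.Walk in
theorem hamiltonian_cycle_iff_edge_cuts_general
    {V : Type*} [Fintype V] [DecidableEq V]
    (G : SimpleGraph V)
    {v : V} (C : G.Walk v v) (hC : C.IsCycle) :
    C.IsHamiltonianCycle ↔
      ∀ s : Finset V, s.Nonempty → sᶜ.Nonempty →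
        Even {e : Sym2 V | e ∈ C.edges ∧ ∃ a ∈ s, ∃ b ∈ (sᶜ : Finset V), e = s(a, b)}.ncard ∧
        2 ≤ {e : Sym2 V | e ∈ C.edges ∧ ∃ a ∈ s, ∃ b ∈ (sᶜ : Finset V), e = s(a, b)}.ncard := by
  classical
  have hcut (s : Finset V) :
      {e : Sym2 V | e ∈ C.edges ∧ ∃ a ∈ s, ∃ b ∈ (sᶜ : Finset V), e = s(a, b)}.ncard =
        C.edges.countP (Sym2.Crosses (s : Set V) ·) := by
    rw [← hC.edges_nodup.ncard_setOf_mem_and]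
    simp [Sym2.Crosses]
  simp_rw [hcut]
  constructor
  · intro hH s ⟨a, ha⟩ ⟨b, hb⟩
    have heven := even_countP_crosses (s : Set V) C
    have hpos := countP_crosses_pos (s : Set V) C (hH.mem_support a) (hH.mem_support b)
      ha (by simpa using hb)
    refine ⟨heven, ?_⟩
    obtain ⟨k, hk⟩ := heven
    omega
  · intro h
    refine hC.isHamiltonianCycle_of_forall_mem_support fun a => by_contra fun ha => ?_
    have h2 := (h C.support.toFinset ⟨v, by simp⟩ ⟨a, by simpa using ha⟩).2
    rw [List.countP_eq_zero.mpr fun e he => by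
      simpa using not_crosses_support_of_mem_edges he] at h2
    omega

/-- A cycle `C` in a finite graph `G` without isolated vertices is a
Hamiltonian cycle if and only if for every edge cut `E_G(s, sᶜ)`
(with both sides nonempty), the number of edges of `C` lying in the cut
is even and at least `2`. -/
theorem hamiltonian_cycle_iff_edge_cuts
    {V : Type*} [Fintype V] [DecidableEq V]
    (G : SimpleGraph V) [DecidableRel G.Adj]
    (hiso : ∀ v : V, 0 < G.degree v)
    {v : V} (C : G.Walk v v) (hC : C.IsCycle) :
    C.IsHamiltonianCycle ↔
      ∀ s : Finset V, s.Nonempty → sᶜ.Nonempty →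
        Even {e : Sym2 V | e ∈ C.edges ∧ ∃ a ∈ s, ∃ b ∈ (sᶜ : Finset V), e = s(a, b)}.ncard ∧
        2 ≤ {e : Sym2 V | e ∈ C.edges ∧ ∃ a ∈ s, ∃ b ∈ (sᶜ : Finset V), e = s(a, b)}.ncard :=
  hamiltonian_cycle_iff_edge_cuts_general G C hC
end

section
/- Let G be a 2-connected simple graph of order n. Then G contains a cycle passing through all vertices of degree at least n/2. -/
/-!
Any two vertices of degree at least `n / 2` have degree sum at least `n`, so it suffices to run
the Bondy–Chvátal closure argument relative to this vertex set `S`. If `u, v` are non-adjacent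
with `d(u) + d(v) ≥ n`, a cycle of `G + uv` through `S` yields one of `G`: if the cycle uses
`uv`, removing it leaves a `u`–`v` path `P` of `G`, and Ore's rotation closes `P` into a cycle
through all of its vertices — either `u` and `v` have a common neighbour off `P`, or counting
neighbours along `P` gives consecutive vertices `x, y` of `P` with `v ~ x` and `u ~ y`.
Once no such edge can be added, `S` is a clique, and in a `2`-connected graph every clique lies
on a cycle (a clique of size at most two lies in an edge, and no edge is a bridge).
-/

/-- A graph is `2`-connected if it has at least `3` vertices and deleting
any single vertex leaves a connected graph. -/
def SimpleGraph.TwoConnected {V : Type*} [Fintype V] (G : SimpleGraph V) : Prop :=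
  3 ≤ Fintype.card V ∧ ∀ v : V, (G.induce {w : V | w ≠ v}).Connected

open Finset

namespace SimpleGraph

variable {V : Type*} {G : SimpleGraph V} {u v : V}

def IsCyclable (G : SimpleGraph V) (S : Set V) : Prop :=
  ∃ (a : V) (c : G.Walk a a), c.IsCycle ∧ ∀ x ∈ S, x ∈ c.support

lemma IsCyclable.subset {S T : Set V} (hT : G.IsCyclable T) (hST : S ⊆ T) : G.IsCyclable S :=
  let ⟨a, c, hc, hTc⟩ := hT
  ⟨a, c, hc, fun x hx => hTc x (hST hx)⟩

namespace Walk

lemma IsPath.cons_isCycle {p : G.Walk v u} (hp : p.IsPath) (hlen : 2 ≤ p.length)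
    (h : G.Adj u v) : (cons h p).IsCycle :=
  isCycle_iff_isPath_tail_and_le_length.mpr ⟨by simpa using hp, by simpa using hlen⟩

lemma exists_eq_append_cons_of_mem_darts {p : G.Walk u v} {d : G.Dart} (hd : d ∈ p.darts) :
    ∃ (p₁ : G.Walk u d.fst) (p₂ : G.Walk d.snd v), p = p₁.append (cons d.adj p₂) := by
  induction p with
  | nil => simp at hd
  | cons h q ih =>
    rcases List.mem_cons.mp hd with rfl | hd
    · exact ⟨nil, q, rfl⟩
    · obtain ⟨q₁, q₂, rfl⟩ := ih hd
      exact ⟨cons h q₁, q₂, rfl⟩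

lemma IsCycle.exists_isPath_of_mem_darts {a : V} {c : G.Walk a a} (hc : c.IsCycle)
    {d : G.Dart} (hd : d ∈ c.darts) :
    ∃ p : G.Walk d.snd d.fst, p.IsPath ∧ d.edge ∉ p.edges ∧ c.support ⊆ p.support := by
  obtain ⟨c₁, c₂, rfl⟩ := exists_eq_append_cons_of_mem_darts hd
  have hperm : (c₂.append c₁).support.Perm (c₁.append (cons d.adj c₂)).support.tail := by
    simpa [support_append, tail_support_append] using List.perm_append_comm
  refine ⟨c₂.append c₁, IsPath.mk' (hperm.nodup_iff.mpr hc.support_nodup), ?_, ?_⟩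
  · have := hc.isTrail.edges_nodup
    simp only [edges_append, edges_cons, List.nodup_append, List.nodup_cons] at this
    have hde : d.edge = s(d.fst, d.snd) := rfl
    simp only [edges_append, List.mem_append, not_or, hde]
    grind
  · intro x hx
    simp only [mem_support_append_iff, support_cons, List.mem_cons] at hx ⊢
    rcases hx with hx | rfl | hx <;> simp [*]

lemma IsCycle.exists_isPath_of_mem_edges {a : V} {c : G.Walk a a} (hc : c.IsCycle)
    (he : s(u, v) ∈ c.edges) :
    ∃ p : G.Walk u v, p.IsPath ∧ s(u, v) ∉ p.edges ∧ c.support ⊆ p.support := by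
  obtain ⟨⟨⟨x, y⟩, hxy⟩, hd, hde⟩ := List.mem_map.mp he
  obtain ⟨p, hp, hpe, hcp⟩ := hc.exists_isPath_of_mem_darts hd
  rcases Sym2.eq_iff.mp hde with ⟨rfl, rfl⟩ | ⟨rfl, rfl⟩
  · refine ⟨p.reverse, hp.reverse, ?_, fun x hx => by simpa using hcp hx⟩
    simpa [Sym2.eq_swap] using hpe
  · exact ⟨p, hp, by simpa [Sym2.eq_swap] using hpe, hcp⟩

lemma IsPath.isCyclable_of_adj_of_notMem {w : V} {p : G.Walk u v} (hp : p.IsPath)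
    (huv : u ≠ v) (hw : w ∉ p.support) (hu : G.Adj u w) (hv : G.Adj v w) :
    G.IsCyclable {x | x ∈ p.support} := by
  have hlen : 1 ≤ p.length := not_nil_iff_lt_length.mp (not_nil_of_ne huv)
  refine ⟨u, cons hu (cons hv.symm p.reverse), ?_, fun x (hx : x ∈ p.support) => by simp [hx]⟩
  exact (hp.reverse.cons (by simpa using hw)).cons_isCycle (by simpa using hlen) hu

lemma IsPath.isCyclable_of_mem_darts {p : G.Walk u v} (hp : p.IsPath) (huv : ¬G.Adj u v)
    {d : G.Dart} (hd : d ∈ p.darts) (hv : G.Adj v d.fst) (hu : G.Adj u d.snd) :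
    G.IsCyclable {x | x ∈ p.support} := by
  obtain ⟨p₁, p₂, rfl⟩ := exists_eq_append_cons_of_mem_darts hd
  set q : G.Walk d.snd u := p₂.append (cons hv p₁.reverse)
  have hperm : q.support.Perm (p₁.append (cons d.adj p₂)).support := by
    simpa [q, support_append] using List.perm_append_comm.trans
      (List.Perm.append_right _ (List.reverse_perm _))
  have hlen : 2 ≤ q.length := by
    by_contra hq
    have h₁ : p₁.length = 0 := by simp [q] at hq; omega
    have h₂ : p₂.length = 0 := by simp [q] at hq; omega
    exact huv (eq_of_length_eq_zero h₁ ▸ eq_of_length_eq_zero h₂ ▸ d.adj)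
  refine ⟨u, cons hu q, (IsPath.mk' (hperm.nodup_iff.mpr hp.support_nodup)).cons_isCycle hlen hu,
    fun x hx => List.mem_cons_of_mem _ (hperm.mem_iff.mpr hx)⟩

lemma exists_mem_darts_adj_adj_of_length_lt [DecidableEq V] [DecidableRel G.Adj] (p : G.Walk u v)
    (h : p.length < #(p.support.toFinset.filter (G.Adj u)) +
      #(p.support.toFinset.filter (G.Adj v))) :
    ∃ d ∈ p.darts, G.Adj v d.fst ∧ G.Adj u d.snd := by
  by_contra! hno
  set A := p.darts.toFinset.filter (G.Adj v ·.fst)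
  set B := p.darts.toFinset.filter (G.Adj u ·.snd)
  have hA : #(p.support.toFinset.filter (G.Adj v)) ≤ #A := by
    refine (card_le_card fun x hx => ?_).trans (card_image_le (f := fun d : G.Dart => d.fst))
    rw [mem_filter, List.mem_toFinset, ← p.map_fst_darts_append, List.mem_append,
      List.mem_singleton] at hx
    obtain ⟨hx | rfl, hvx⟩ := hx
    · obtain ⟨d, hd, rfl⟩ := List.mem_map.mp hx
      exact mem_image_of_mem _ (by simp [A, hd, hvx])
    · exact (hvx.ne rfl).elim
  have hB : #(p.support.toFinset.filter (G.Adj u)) ≤ #B := by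
    refine (card_le_card fun x hx => ?_).trans (card_image_le (f := fun d : G.Dart => d.snd))
    rw [mem_filter, List.mem_toFinset, ← p.cons_tail_support, ← p.map_snd_darts,
      List.mem_cons] at hx
    obtain ⟨rfl | hx, hux⟩ := hx
    · exact (hux.ne rfl).elim
    · obtain ⟨d, hd, rfl⟩ := List.mem_map.mp hx
      exact mem_image_of_mem _ (by simp [B, hd, hux])
  have hAB : Disjoint A B :=
    disjoint_filter.mpr fun d hd hv hu => hno d (List.mem_toFinset.mp hd) hv hu
  have hcard : #A + #B ≤ p.length := by
    rw [← card_union_of_disjoint hAB, ← p.length_darts]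
    exact (card_le_card (union_subset (filter_subset _ _) (filter_subset _ _))).trans
      (List.toFinset_card_le _)
  omega

lemma IsPath.length_lt_card_filter_adj_add [Fintype V] [DecidableEq V] [DecidableRel G.Adj]
    {p : G.Walk u v} (hp : p.IsPath) (hcommon : ∀ w ∉ p.support, ¬(G.Adj u w ∧ G.Adj v w))
    (hdeg : Fintype.card V ≤ G.degree u + G.degree v) :
    p.length < #(p.support.toFinset.filter (G.Adj u)) + #(p.support.toFinset.filter (G.Adj v)) := by
  set s := p.support.toFinset
  have hs : #s = p.length + 1 := by
    rw [List.toFinset_card_of_nodup hp.support_nodup, length_support]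
  have hsplit (x : V) : G.degree x = #(s.filter (G.Adj x)) + #(sᶜ.filter (G.Adj x)) := by
    rw [← card_neighborFinset_eq_degree, neighborFinset_eq_filter, ← card_union_of_disjoint
      (disjoint_filter_filter disjoint_compl_right), ← filter_union, union_compl]
  have hout : #(sᶜ.filter (G.Adj u)) + #(sᶜ.filter (G.Adj v)) ≤ Fintype.card V - #s := by
    rw [← card_union_of_disjoint, ← card_compl]
    · exact card_le_card (union_subset (filter_subset _ _) (filter_subset _ _))
    · refine Finset.disjoint_left.mpr fun w hu hv => ?_
      simp only [s, mem_filter, mem_compl, List.mem_toFinset] at hu hv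
      exact hcommon w hu.1 ⟨hu.2, hv.2⟩
  have := card_le_univ s
  rw [hsplit u, hsplit v] at hdeg
  omega

theorem IsPath.isCyclable_of_card_le_degree_add_degree [Fintype V] [DecidableEq V]
    [DecidableRel G.Adj] {p : G.Walk u v} (hp : p.IsPath) (huv : u ≠ v) (hnadj : ¬G.Adj u v)
    (hdeg : Fintype.card V ≤ G.degree u + G.degree v) : G.IsCyclable {x | x ∈ p.support} := by
  by_cases hcommon : ∃ w ∉ p.support, G.Adj u w ∧ G.Adj v w
  · obtain ⟨w, hw, hu, hv⟩ := hcommon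
    exact hp.isCyclable_of_adj_of_notMem huv hw hu hv
  · obtain ⟨d, hd, hv, hu⟩ := p.exists_mem_darts_adj_adj_of_length_lt
      (hp.length_lt_card_filter_adj_add (fun w hw h => hcommon ⟨w, hw, h⟩) hdeg)
    exact hp.isCyclable_of_mem_darts hnadj hd hv hu

end Walk

theorem IsCyclable.of_sup_edge [Fintype V] [DecidableEq V] [DecidableRel G.Adj] {S : Set V}
    (huv : u ≠ v) (hnadj : ¬G.Adj u v) (hdeg : Fintype.card V ≤ G.degree u + G.degree v)
    (hS : (G ⊔ edge u v).IsCyclable S) : G.IsCyclable S := by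
  obtain ⟨a, C, hC, hSC⟩ := hS
  have hedges {l : List (Sym2 V)} (hl : ∀ e ∈ l, e ∈ (G ⊔ edge u v).edgeSet) (huvl : s(u, v) ∉ l) :
      ∀ e ∈ l, e ∈ G.edgeSet := fun e he => by
    have := hl e he
    rw [edgeSet_sup, edgeSet_edge_of_ne huv] at this
    exact this.resolve_right fun h => huvl (Set.mem_singleton_iff.mp h ▸ he)
  by_cases he : s(u, v) ∈ C.edges
  · obtain ⟨p, hp, hpe, hCp⟩ := hC.exists_isPath_of_mem_edges he
    have hpG := hedges p.edges_subset_edgeSet hpe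
    refine ((hp.transfer hpG).isCyclable_of_card_le_degree_add_degree huv hnadj hdeg).subset ?_
    exact fun x hx => by simpa using hCp (hSC x hx)
  · have hCG := hedges C.edges_subset_edgeSet he
    exact ⟨a, C.transfer G hCG, hC.transfer hCG, by simpa using hSC⟩

lemma cycleGraph.mem_support_cycle {n : ℕ} (i : Fin (n + 3)) :
    i ∈ (cycleGraph.cycle n).support := by
  convert (cycleGraph.cycle n).getVert_mem_support (n + 3 - i)
  rw [cycleGraph.getVert_cycle (by omega)]
  ext
  simp [Nat.sub_sub_self i.2.le, Nat.mod_eq_of_lt i.2]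

lemma IsClique.isCyclable_of_three_le_card {S : Finset V} (hS : G.IsClique (S : Set V))
    (h3 : 3 ≤ #S) : G.IsCyclable S := by
  obtain ⟨n, hn⟩ : ∃ n, #S = n + 3 := ⟨#S - 3, by omega⟩
  let e : Fin (n + 3) ≃ S := (S.equivFinOfCardEq hn).symm
  have he : Function.Injective fun i => (e i : V) := Subtype.val_injective.comp e.injective
  let φ : cycleGraph (n + 3) →g G :=
    ⟨fun i => e i, fun {i j} hij => hS (e i).2 (e j).2 (he.ne hij.ne)⟩
  refine ⟨_, (cycleGraph.cycle n).map φ, (Walk.isCycle_map_iff_of_injective he).mpr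
    cycleGraph.isCycle_cycle, fun x hx => ?_⟩
  rw [Walk.support_map]
  exact List.mem_map.mpr ⟨e.symm ⟨x, hx⟩, cycleGraph.mem_support_cycle _, by simp [φ]⟩

namespace TwoConnected

variable [Fintype V] (h2 : G.TwoConnected)
include h2

lemma exists_ne_ne (x y : V) : ∃ z, z ≠ x ∧ z ≠ y :=
  ENat.exists_ne_ne_of_three_le (by simpa using h2.1) x y

lemma mono {H : SimpleGraph V} (hle : G ≤ H) : H.TwoConnected :=
  ⟨h2.1, fun v => (h2.2 v).mono fun _ _ h => hle h⟩

lemma preconnected : G.Preconnected := fun x y => by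
  obtain ⟨z, hzx, hzy⟩ := h2.exists_ne_ne x y
  exact ((h2.2 z).preconnected ⟨x, hzx.symm⟩ ⟨y, hzy.symm⟩).map (Embedding.induce _).toHom

lemma exists_adj (u : V) : ∃ w, G.Adj u w :=
  have : Nontrivial V := Fintype.one_lt_card_iff_nontrivial.mp (by linarith [h2.1])
  h2.preconnected.exists_adj_of_nontrivial u

lemma reachable_deleteEdges {e : Sym2 V} {a x y : V} (ha : a ∈ e) (hx : x ≠ a) (hy : y ≠ a) :
    (G.deleteEdges {e}).Reachable x y := by
  let φ : G.induce {w | w ≠ a} →g G.deleteEdges {e} :=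
    ⟨Subtype.val, fun {x y} hxy => by
      refine deleteEdges_adj.mpr ⟨hxy, fun he => ?_⟩
      rw [Set.mem_singleton_iff] at he
      rcases Sym2.mem_iff.mp (he ▸ ha) with h | h
      exacts [x.2 h.symm, y.2 h.symm]⟩
  exact ((h2.2 a).preconnected ⟨x, hx⟩ ⟨y, hy⟩).map φ

lemma isCyclable_of_adj {u w : V} (huw : G.Adj u w) : G.IsCyclable {u, w} := by
  obtain ⟨z, hzu, hzw⟩ := h2.exists_ne_ne u w
  have hreach : (G.deleteEdges {s(u, w)}).Reachable u w :=
    (h2.reachable_deleteEdges (Sym2.mem_mk_right u w) huw.ne hzw).trans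
      (h2.reachable_deleteEdges (Sym2.mem_mk_left u w) hzu huw.ne.symm)
  obtain ⟨a, c, hc, he⟩ := adj_and_reachable_delete_edges_iff_exists_cycle.mp ⟨huw, hreach⟩
  refine ⟨a, c, hc, fun x hx => ?_⟩
  rcases hx with rfl | rfl
  exacts [c.fst_mem_support_of_mem_edges he, c.snd_mem_support_of_mem_edges he]

lemma isCyclable_of_isClique [DecidableEq V] {S : Finset V} (hS : G.IsClique (S : Set V)) :
    G.IsCyclable S := by
  by_cases h3 : 3 ≤ #S
  · exact hS.isCyclable_of_three_le_card h3
  obtain ⟨u, w, huw, hSuw⟩ : ∃ u w, G.Adj u w ∧ S ⊆ {u, w} := by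
    rcases Nat.lt_or_ge #S 2 with h1 | h2'
    · have : Nonempty V := Fintype.card_pos_iff.mp (by linarith [h2.1])
      obtain ⟨u, hu⟩ := card_le_one_iff_subset_singleton.mp (Nat.le_of_lt_succ h1)
      obtain ⟨w, huw⟩ := h2.exists_adj u
      exact ⟨u, w, huw, hu.trans (by simp)⟩
    · obtain ⟨u, w, hne, rfl⟩ := card_eq_two.mp (show #S = 2 by omega)
      exact ⟨u, w, hS (by simp) (by simp) hne, subset_rfl⟩
  exact (h2.isCyclable_of_adj huw).subset (by rw [← coe_pair]; exact coe_subset.mpr hSuw)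

end TwoConnected

theorem TwoConnected.isCyclable_of_card_le_degree_add_degree [Fintype V] [DecidableEq V]
    [DecidableRel G.Adj] (h2 : G.TwoConnected) {S : Finset V}
    (hS : ∀ x ∈ S, ∀ y ∈ S, x ≠ y → ¬G.Adj x y → Fintype.card V ≤ G.degree x + G.degree y) :
    G.IsCyclable S := by
  -- downward induction in the finite lattice of graphs on `V`
  refine WellFoundedGT.induction (motive := fun G : SimpleGraph V => ∀ [DecidableRel G.Adj],
    G.TwoConnected → (∀ x ∈ S, ∀ y ∈ S, x ≠ y → ¬G.Adj x y →
      Fintype.card V ≤ G.degree x + G.degree y) → G.IsCyclable S) G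
    (fun G ih _ h2 hS => ?_) h2 hS
  by_cases hadd : ∃ u v, u ≠ v ∧ ¬G.Adj u v ∧ Fintype.card V ≤ G.degree u + G.degree v
  · obtain ⟨u, v, huv, hnadj, hdeg⟩ := hadd
    have hle : G ≤ G ⊔ edge u v := le_sup_left
    refine (ih _ (G.lt_sup_edge _ _ huv hnadj) (h2.mono hle) fun x hx y hy hxy hnxy => ?_)
      |>.of_sup_edge huv hnadj hdeg
    exact (hS x hx y hy hxy fun h => hnxy (hle h)).trans
      (add_le_add (degree_le_of_le hle) (degree_le_of_le hle))
  · refine h2.isCyclable_of_isClique fun x hx y hy hxy => ?_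
    by_contra hnxy
    exact hadd ⟨x, y, hxy, hnxy, hS x hx y hy hxy hnxy⟩

end SimpleGraph

/-- (Shi, 1992) A `2`-connected simple graph of order `n` contains a cycle
passing through all vertices of degree at least `n / 2`. -/
theorem cycle_through_large_degree_vertices
    {V : Type*} [Fintype V] [DecidableEq V]
    (G : SimpleGraph V) [DecidableRel G.Adj]
    (h2 : G.TwoConnected) :
    ∃ (a : V) (C : G.Walk a a), C.IsCycle ∧
      ∀ v : V, Fintype.card V ≤ 2 * G.degree v → v ∈ C.support := by
  obtain ⟨a, C, hC, hS⟩ := h2.isCyclable_of_card_le_degree_add_degree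
    (S := univ.filter fun v => Fintype.card V ≤ 2 * G.degree v) fun x hx y hy _ _ => by
      simp only [mem_filter, mem_univ, true_and] at hx hy
      omega
  exact ⟨a, C, hC, fun v hv => hS v (by simpa using hv)⟩
end

section
/- For every positive integer n, the complete graph K_{2n+1} can be decomposed into n edge-disjoint Hamiltonian cycles; in particular, the edge set of K_{2n+1} is a disjoint union of n sets, each forming a cycle through all 2n+1 vertices. -/
/-!
Walecki's construction. Label the vertices of `K_{2n+1}` by `ℤ/2n` together with a hub `∞`.
For `0 ≤ i < n` let `H_i` be the cycle `∞, i, i + 1, i - 1, i + 2, i - 2, …, i - (n - 1), i + n, ∞`.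
Its inner vertices `i + z_k` follow the zigzag `z = 0, 1, -1, 2, -2, …, n`, whose `2n` values are
distinct modulo `2n`, so `H_i` is Hamiltonian. Consecutive zigzag terms add up to `1` or `0`, so an
inner edge `{x, y}` of `H_i` has `x + y ∈ {2i, 2i + 1}`, while its two hub edges join `∞` to `i`
and `i + n`. Either way the edge determines `i`, so the `H_i` are edge-disjoint, and `n` disjoint
trails of length `2n + 1` must use all `n (2n + 1) = (2n + 1).choose 2` edges.
-/

namespace SimpleGraph

namespace Walk

variable {V : Type*} {G : SimpleGraph V}

def ofFun (f : ℕ → V) : (m : ℕ) → (∀ k < m, G.Adj (f k) (f (k + 1))) → G.Walk (f 0) (f m)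
  | 0, _ => .nil
  | m + 1, hf => (ofFun f m fun k hk => hf k (by omega)).concat (hf m (by omega))

variable (f : ℕ → V)

@[simp]
theorem length_ofFun : ∀ (m : ℕ) (hf : ∀ k < m, G.Adj (f k) (f (k + 1))),
    (ofFun f m hf).length = m
  | 0, _ => rfl
  | m + 1, hf => by simp [ofFun, length_ofFun]

theorem support_ofFun : ∀ (m : ℕ) (hf : ∀ k < m, G.Adj (f k) (f (k + 1))),
    (ofFun f m hf).support = (List.range (m + 1)).map f
  | 0, _ => rfl
  | m + 1, hf => by simp [ofFun, support_ofFun, List.range_succ (n := m + 1)]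

theorem edges_ofFun : ∀ (m : ℕ) (hf : ∀ k < m, G.Adj (f k) (f (k + 1))),
    (ofFun f m hf).edges = (List.range m).map fun k => s(f k, f (k + 1))
  | 0, _ => rfl
  | m + 1, hf => by simp [ofFun, edges_ofFun, List.range_succ (n := m)]

theorem mem_edges_ofFun {m : ℕ} {hf : ∀ k < m, G.Adj (f k) (f (k + 1))} {e : Sym2 V} :
    e ∈ (ofFun f m hf).edges ↔ ∃ k < m, s(f k, f (k + 1)) = e := by
  simp [edges_ofFun]

theorem isHamiltonianCycle_ofFun [Fintype V] [DecidableEq V] {m : ℕ}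
    (hf : ∀ k < m, G.Adj (f k) (f (k + 1))) (hper : f m = f 0)
    (hinj : Set.InjOn f (Set.Icc 1 m)) (hcard : Fintype.card V = m) (h3 : 3 ≤ m) :
    ((ofFun f m hf).copy rfl hper).IsHamiltonianCycle := by
  have hnil : ¬((ofFun f m hf).copy rfl hper).Nil := by
    rw [← length_eq_zero_iff, length_copy, length_ofFun]
    omega
  rw [isHamiltonianCycle_iff_isCycle_and_length_eq, isCycle_iff_isPath_tail_and_le_length,
    isPath_def, support_tail_of_not_nil _ hnil]
  simp only [support_copy, support_ofFun, length_copy, length_ofFun, List.range_succ_eq_map,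
    List.map_cons, List.tail_cons, List.map_map]
  refine ⟨⟨List.Nodup.map_on ?_ List.nodup_range, h3⟩, hcard.symm⟩
  intro j hj k hk hjk
  rw [List.mem_range] at hj hk
  have := hinj (by simp only [Set.mem_Icc]; omega : j + 1 ∈ Set.Icc 1 m)
    (by simp only [Set.mem_Icc]; omega) hjk
  omega

end Walk

theorem top_adj_of_injOn {V : Type*} {f : ℕ → V} {m : ℕ} (hm : 2 ≤ m) (hper : f m = f 0)
    (hinj : Set.InjOn f (Set.Icc 1 m)) :
    ∀ k < m, (⊤ : SimpleGraph V).Adj (f k) (f (k + 1)) := by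
  rintro (_ | k) hk hfk
  · rw [← hper] at hfk
    have := hinj (by simp only [Set.mem_Icc]; omega) (by simp only [Set.mem_Icc]; omega) hfk
    omega
  · have := hinj (by simp only [Set.mem_Icc]; omega) (by simp only [Set.mem_Icc]; omega) hfk
    omega

open Finset in
theorem iUnion_edges_eq_edgeSet_of_sum_length_eq {V : Type*} {G : SimpleGraph V}
    [DecidableEq V] [Fintype G.edgeSet] {ι : Type*} [Fintype ι] {u v : ι → V}
    (p : ∀ i, G.Walk (u i) (v i)) (htrail : ∀ i, (p i).IsTrail)
    (hdisj : ∀ i j, i ≠ j → ∀ e, e ∈ (p i).edges → e ∉ (p j).edges)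
    (hsum : ∑ i, (p i).length = #G.edgeFinset) :
    ⋃ i, {e | e ∈ (p i).edges} = G.edgeSet := by
  set S := univ.biUnion fun i => (p i).edges.toFinset
  have hsub : S ⊆ G.edgeFinset := by
    intro e he
    simp only [S, mem_biUnion, List.mem_toFinset] at he
    obtain ⟨i, -, hi⟩ := he
    exact mem_edgeFinset.mpr ((p i).edges_subset_edgeSet hi)
  have hcard : #S = #G.edgeFinset := by
    rw [card_biUnion, ← hsum]
    · exact sum_congr rfl fun i _ => by
        rw [List.toFinset_card_of_nodup (htrail i).edges_nodup, Walk.length_edges]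
    · intro i _ j _ hij
      exact List.disjoint_toFinset_iff_disjoint.mpr fun e hi hj => hdisj i j hij e hi hj
  have hS := eq_of_subset_of_card_le hsub hcard.ge
  ext e
  simpa [S] using congrArg (e ∈ ·) hS

end SimpleGraph

namespace Walecki

open SimpleGraph

def zigzag (k : ℕ) : ℤ := if k % 2 = 0 then -((k : ℤ) / 2) else (k : ℤ) / 2 + 1

theorem zigzag_zero : zigzag 0 = 0 := rfl

theorem zigzag_injective : Function.Injective zigzag := by
  intro j k h
  simp only [zigzag] at h
  split_ifs at h <;> omega

theorem zigzag_add_zigzag_succ (k : ℕ) : zigzag k + zigzag (k + 1) = 1 - k % 2 := by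
  simp only [zigzag]
  split_ifs <;> omega

variable (n : ℕ)

theorem abs_zigzag_sub_zigzag_lt {j k : ℕ} (hj : j < 2 * n) (hk : k < 2 * n) :
    |zigzag j - zigzag k| < 2 * n := by
  rw [abs_sub_lt_iff]
  simp only [zigzag]
  constructor <;> split_ifs <;> omega

variable [NeZero n]

theorem zigzag_two_mul_sub_one : zigzag (2 * n - 1) = n := by
  have := NeZero.pos n
  rw [zigzag, if_neg (by omega)]
  omega

/-- The vertex `a mod 2n` of `K_{2n+1}`; the remaining vertex `Fin.last (2 * n)` is the hub. -/
def vertex (a : ℤ) : Fin (2 * n + 1) := Fin.castSucc ⟨(a : ZMod (2 * n)).val, ZMod.val_lt _⟩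

theorem vertex_ne_last (a : ℤ) : vertex n a ≠ Fin.last _ := Fin.castSucc_ne_last _

theorem val_vertex (a : ℤ) : ((vertex n a : ℕ) : ℤ) = a % (2 * n) := by
  rw [vertex, Fin.val_castSucc, ZMod.val_intCast]
  push_cast
  rfl

theorem eq_of_vertex_eq {a b : ℤ} (hab : |a - b| < 2 * n) (h : vertex n a = vertex n b) :
    a = b := by
  have hmod : a % (2 * n) = b % (2 * n) := by
    simpa only [val_vertex] using congrArg (fun v : Fin _ => ((v : ℕ) : ℤ)) h
  have := Int.eq_zero_of_abs_lt_dvd (Int.ModEq.dvd hmod.symm) hab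
  omega

def cycleVertex (i : ℕ) : ℕ → Fin (2 * n + 1)
  | 0 => Fin.last _
  | k + 1 => if k < 2 * n then vertex n (i + zigzag k) else Fin.last _

theorem cycleVertex_two_mul_add_one (i : ℕ) :
    cycleVertex n i (2 * n + 1) = cycleVertex n i 0 := by
  simp [cycleVertex]

theorem injOn_cycleVertex (i : ℕ) : Set.InjOn (cycleVertex n i) (Set.Icc 1 (2 * n + 1)) := by
  rintro (_ | j) ⟨hj, hj'⟩ (_ | k) ⟨hk, hk'⟩ h
  · rfl
  · omega
  · omega
  simp only [cycleVertex] at h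
  split_ifs at h with hj2 hk2
  · have := eq_of_vertex_eq n (by simpa using abs_zigzag_sub_zigzag_lt n hj2 hk2) h
    rw [zigzag_injective (add_left_cancel this)]
  · exact absurd h (vertex_ne_last n _)
  · exact absurd h.symm (vertex_ne_last n _)
  · omega

def cycle (i : ℕ) :
    (⊤ : SimpleGraph (Fin (2 * n + 1))).Walk (cycleVertex n i 0) (cycleVertex n i 0) :=
  (Walk.ofFun (cycleVertex n i) (2 * n + 1)
    (top_adj_of_injOn (by have := NeZero.pos n; omega) (cycleVertex_two_mul_add_one n i)
      (injOn_cycleVertex n i))).copy rfl (cycleVertex_two_mul_add_one n i)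

theorem isHamiltonianCycle_cycle (i : ℕ) : (cycle n i).IsHamiltonianCycle :=
  Walk.isHamiltonianCycle_ofFun _ _ _ (injOn_cycleVertex n i) (Fintype.card_fin _)
    (by have := NeZero.pos n; omega)

/-- The `i` with `x ∈ {i, i + n}` for a hub edge `{∞, x}`, and with `x + y ∈ {2i, 2i + 1}` for an
inner edge `{x, y}`. -/
def cycleIndex : Sym2 (Fin (2 * n + 1)) → ℤ :=
  Sym2.lift ⟨fun a b => if a = Fin.last _ then (b : ℤ) % n else if b = Fin.last _ then (a : ℤ) % n
    else ((a : ℤ) + b) % (2 * n) / 2, by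
      intro a b
      dsimp only
      split_ifs <;> subst_vars <;> first | rfl | ring_nf⟩

theorem cycleIndex_last_vertex (a : ℤ) : cycleIndex n s(Fin.last _, vertex n a) = a % n := by
  simp only [cycleIndex, Sym2.lift_mk, if_true]
  rw [val_vertex, Int.emod_emod_of_dvd _ (dvd_mul_left _ _)]

theorem cycleIndex_vertex_vertex (a b : ℤ) :
    cycleIndex n s(vertex n a, vertex n b) = (a + b) % (2 * n) / 2 := by
  simp only [cycleIndex, Sym2.lift_mk]
  rw [if_neg (vertex_ne_last n a), if_neg (vertex_ne_last n b), val_vertex, val_vertex,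
    ← Int.add_emod]

theorem cycleIndex_cycleVertex {i k : ℕ} (hi : i < n) (hk : k < 2 * n + 1) :
    cycleIndex n s(cycleVertex n i k, cycleVertex n i (k + 1)) = i := by
  rcases k with _ | k
  · rw [cycleVertex, cycleVertex, if_pos (NeZero.pos _), cycleIndex_last_vertex, zigzag_zero,
      add_zero]
    exact Int.emod_eq_of_lt (by omega) (by omega)
  · rw [cycleVertex, cycleVertex, if_pos (by omega : k < 2 * n)]
    by_cases hk' : k + 1 < 2 * n
    · rw [if_pos hk', cycleIndex_vertex_vertex]
      have hsum := zigzag_add_zigzag_succ k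
      rw [Int.emod_eq_of_lt (by omega) (by omega)]
      omega
    · obtain rfl : k = 2 * n - 1 := by omega
      rw [if_neg hk', Sym2.eq_swap, cycleIndex_last_vertex, zigzag_two_mul_sub_one,
        Int.add_emod_right]
      exact Int.emod_eq_of_lt (by omega) (by omega)

theorem cycleIndex_of_mem_edges {i : ℕ} (hi : i < n) {e : Sym2 (Fin (2 * n + 1))}
    (he : e ∈ (cycle n i).edges) : cycleIndex n e = i := by
  rw [cycle, Walk.edges_copy, Walk.mem_edges_ofFun] at he
  obtain ⟨k, hk, rfl⟩ := he
  exact cycleIndex_cycleVertex n hi hk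

end Walecki

/-- For every positive integer `n`, the complete graph `K_{2n+1}` decomposes
into `n` edge-disjoint Hamiltonian cycles: there are `n` Hamiltonian cycles
whose edge sets are pairwise disjoint and whose union is the whole edge set. -/
theorem complete_graph_odd_hamiltonian_decomposition (n : ℕ) (hn : 0 < n) :
    ∃ (a : Fin n → Fin (2 * n + 1))
      (C : ∀ i : Fin n, (⊤ : SimpleGraph (Fin (2 * n + 1))).Walk (a i) (a i)),
      (∀ i, (C i).IsHamiltonianCycle) ∧
      (∀ i j, i ≠ j → ∀ e : Sym2 (Fin (2 * n + 1)),
          e ∈ (C i).edges → e ∉ (C j).edges) ∧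
      (⋃ i : Fin n, {e : Sym2 (Fin (2 * n + 1)) | e ∈ (C i).edges})
        = (⊤ : SimpleGraph (Fin (2 * n + 1))).edgeSet := by
  have : NeZero n := ⟨hn.ne'⟩
  have hham (i : Fin n) := Walecki.isHamiltonianCycle_cycle n i
  have hdisj (i j : Fin n) (hij : i ≠ j) (e) (hi : e ∈ (Walecki.cycle n i).edges) :
      e ∉ (Walecki.cycle n j).edges := fun hj =>
    hij <| Fin.ext <| by
      exact_mod_cast (Walecki.cycleIndex_of_mem_edges n i.isLt hi).symm.trans
        (Walecki.cycleIndex_of_mem_edges n j.isLt hj)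
  refine ⟨fun i => Walecki.cycleVertex n i 0, fun i => Walecki.cycle n i, hham, hdisj, ?_⟩
  refine SimpleGraph.iUnion_edges_eq_edgeSet_of_sum_length_eq _
    (fun i => (hham i).isCycle.isTrail) hdisj ?_
  rw [SimpleGraph.card_edgeFinset_top_eq_card_choose_two, Nat.choose_two_right]
  simp only [(hham _).length_eq, Fintype.card_fin, Finset.sum_const, Finset.card_univ,
    smul_eq_mul, Nat.add_sub_cancel]
  rw [show (2 * n + 1) * (2 * n) = 2 * (n * (2 * n + 1)) by ring, Nat.mul_div_cancel_left _ two_pos]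
end
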